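/- arXiv:2307.15075 — 2 statements merged into one kernel-verified Lean document; each statement's English description precedes it below -/
import Mathlib

section
/- Let (g, γ) be a local cocycle n-Lie bialgebra, i.e., γ = γ_1 + ... + γ_n where each γ_i satisfies γ_i([x_1,...,x_n]) = Σ_{j=1}^n (−1)^{n−j}(1^{⊗(i−1)} ⊗ ad_{x_1,...,x̂_j,...,x_n} ⊗ 1^{⊗(n−i)})γ_i(x_j), and ᵗγ defines an n-Lie bracket on g*. If additionally Σ_{i,j,k=1, i≠k}^n (−1)^{n−j}(1^{⊗(k−1)} ⊗ ad_{x_1,...,x̂_j,...,x_n} ⊗ 1^{⊗(n−k)})γ_i(x_j) = 0 for all x_1,...,x_n, then (g, γ) is an n-Lie bialgebra, i.e., γ is a 1-cocycle with respect to ad^{(n)}. -/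
open scoped TensorProduct

noncomputable section

variable {K V : Type*} [Field K] [CharZero K] [AddCommGroup V] [Module K V]

/-- `ad_{x₁,…,x_{n-1}} : V → V`, `y ↦ [x₁,…,x_{n-1},y]`. -/
def adMap {m : ℕ} (b : MultilinearMap K (fun _ : Fin (m + 1) => V) V)
    (X : Fin m → V) : V →ₗ[K] V := b.curryRight X

/-- `1^{⊗(i-1)} ⊗ f ⊗ 1^{⊗(n-i)}` acting on `⊗ⁿ V` (position `i`, `0`-indexed). -/
def tmap {n : ℕ} (i : Fin n) (f : V →ₗ[K] V) :
    (⨂[K] _ : Fin n, V) →ₗ[K] (⨂[K] _ : Fin n, V) :=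
  PiTensorProduct.map (Function.update (fun _ => LinearMap.id) i f)

/-- The diagonal (adjoint) action `ad^{(n)}` on `⊗ⁿ V`. -/
def adP {m : ℕ} (b : MultilinearMap K (fun _ : Fin (m + 1) => V) V) (p : ℕ)
    (X : Fin m → V) : (⨂[K] _ : Fin p, V) →ₗ[K] (⨂[K] _ : Fin p, V) :=
  ∑ i : Fin p, tmap i (adMap b X)

/-- Pairing of `⊗ⁿ V` with an `n`-tuple of functionals. -/
def pairV {n : ℕ} (ξ : Fin n → Module.Dual K V) : (⨂[K] _ : Fin n, V) →ₗ[K] K :=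
  PiTensorProduct.lift ((MultilinearMap.mkPiAlgebra K (Fin n) K).compLinearMap ξ)

/-- A local cocycle `n`-Lie bialgebra `(g, γ = γ₁+⋯+γₙ)` (`n = m+1`), each `γᵢ`
satisfying the `Rᵢ`-operad condition, which moreover satisfies
`Σ_{i≠k,j} (−1)^{n−j}(1^{⊗(k−1)} ⊗ ad_{x̂ⱼ} ⊗ 1^{⊗(n−k)})γᵢ(xⱼ) = 0`,
is an `n`-Lie bialgebra: `γ` is a 1-cocycle with respect to `ad^{(n)}`. -/
theorem local_cocycle_to_bialgebra {m : ℕ}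
    (b : MultilinearMap K (fun _ : Fin (m + 1) => V) V)
    (halt : ∀ (v : Fin (m + 1) → V) (i j : Fin (m + 1)), i ≠ j → v i = v j → b v = 0)
    (hFJ : ∀ (x : Fin m → V) (y : Fin (m + 1) → V),
      b (Fin.snoc x (b y)) = ∑ i, b (Function.update y i (b (Fin.snoc x (y i)))))
    (γs : Fin (m + 1) → (V →ₗ[K] ⨂[K] _ : Fin (m + 1), V))
    -- each `γᵢ` is an `Rᵢ`-operad map
    (hR : ∀ (i : Fin (m + 1)) (x : Fin (m + 1) → V),
      γs i (b x) = ∑ j : Fin (m + 1), ((-1 : K) ^ (m - (j : ℕ))) •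
        tmap i (adMap b (x ∘ j.succAbove)) (γs i (x j)))
    (c : MultilinearMap K (fun _ : Fin (m + 1) => Module.Dual K V) (Module.Dual K V))
    (caltern : ∀ (ξ : Fin (m + 1) → Module.Dual K V) (i j : Fin (m + 1)),
      i ≠ j → ξ i = ξ j → c ξ = 0)
    (cFJ : ∀ (ξ : Fin m → Module.Dual K V) (η : Fin (m + 1) → Module.Dual K V),
      c (Fin.snoc ξ (c η)) = ∑ i, c (Function.update η i (c (Fin.snoc ξ (η i)))))
    -- `ᵗγ` defines the `n`-Lie bracket on `g*`, where `γ = γ₁ + ⋯ + γₙ`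
    (hcompat : ∀ (ξ : Fin (m + 1) → Module.Dual K V) (x : V),
      c ξ x = pairV ξ ((∑ i, γs i) x))
    -- the extra compatibility condition
    (hextra : ∀ x : Fin (m + 1) → V,
      ∑ i : Fin (m + 1), ∑ k : Fin (m + 1), ∑ j : Fin (m + 1),
        (if i = k then 0 else
          ((-1 : K) ^ (m - (j : ℕ))) • tmap k (adMap b (x ∘ j.succAbove)) (γs i (x j))) = 0) :
    ∀ x : Fin (m + 1) → V,
      (∑ i, γs i) (b x) = ∑ j : Fin (m + 1), ((-1 : K) ^ (m - (j : ℕ))) •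
        adP b (m + 1) (x ∘ j.succAbove) ((∑ i, γs i) (x j)) := by
  intro x
  set T : Fin (m + 1) → Fin (m + 1) → Fin (m + 1) → (⨂[K] _ : Fin (m + 1), V) :=
    fun i k j => ((-1 : K) ^ (m - (j : ℕ))) •
      tmap k (adMap b (x ∘ j.succAbove)) (γs i (x j)) with hT
  have hL : (∑ i, γs i) (b x) = ∑ i, ∑ j, T i i j := by
    simp only [LinearMap.sum_apply, hT]
    exact Finset.sum_congr rfl fun i _ => hR i x
  have hRHS : (∑ j : Fin (m + 1), ((-1 : K) ^ (m - (j : ℕ))) •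
      adP b (m + 1) (x ∘ j.succAbove) ((∑ i, γs i) (x j)))
      = ∑ j, ∑ k, ∑ i, T i k j := by
    refine Finset.sum_congr rfl fun j _ => ?_
    simp only [adP, LinearMap.sum_apply, hT, Finset.smul_sum, map_sum]
    exact Finset.sum_comm
  have hE := hextra x
  change ∑ i, ∑ k, ∑ j, (if i = k then 0 else T i k j) = 0 at hE
  have key : ∑ i, ∑ k, ∑ j, T i k j = ∑ i, ∑ j, T i i j := by
    have expand : ∀ i : Fin (m + 1),
        ∑ k, ∑ j, T i k j
          = (∑ j, T i i j) + ∑ k, ∑ j, (if i = k then 0 else T i k j) := by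
      intro i
      have : ∀ k : Fin (m + 1), ∑ j, T i k j
          = (if i = k then ∑ j, T i k j else 0) + (if i = k then 0 else ∑ j, T i k j) := by
        intro k; by_cases h : i = k <;> simp [h]
      rw [Finset.sum_congr rfl fun k _ => this k, Finset.sum_add_distrib,
        Finset.sum_ite_eq]
      simp [Finset.sum_ite]
    rw [Finset.sum_congr rfl fun i _ => expand i, Finset.sum_add_distrib, hE, add_zero]
  rw [hL, hRHS, ← key]
  calc ∑ i, ∑ k, ∑ j, T i k j
      = ∑ k, ∑ i, ∑ j, T i k j := Finset.sum_comm
    _ = ∑ k, ∑ j, ∑ i, T i k j := Finset.sum_congr rfl fun k _ => Finset.sum_comm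
    _ = ∑ j, ∑ k, ∑ i, T i k j := Finset.sum_comm
end
end

section
/- Let (g, γ) be an n-Lie bialgebra with brackets μ on g and [·,...,·]_{g*} = ᵗγ on g*. Then for all ξ_1,...,ξ_n ∈ g*, x_1,...,x_n ∈ g: ⟨[ξ_1,...,ξ_n]_{g*}, [x_1,...,x_n]⟩ = Σ_{i,j=1}^n (−1)^{i+j} ⟨ad*_{x_1,...,x̂_j,...,x_n}(ξ_i), Ad*_{ξ_1,...,ξ̂_i,...,ξ_n}(x_j)⟩, where ad* is the coadjoint action of g on g* and Ad* the coadjoint action of g* on g. -/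
open scoped TensorProduct

noncomputable section

variable {K V : Type*} [Field K] [CharZero K] [AddCommGroup V] [Module K V]

/-- The coadjoint action `ad*`: `⟨ad*_X ξ, x⟩ = −⟨ξ, [X, x]⟩`. -/
def coad {m : ℕ} (b : MultilinearMap K (fun _ : Fin (m + 1) => V) V)
    (X : Fin m → V) : Module.Dual K V →ₗ[K] Module.Dual K V := -(adMap b X).dualMap

lemma pairV_tmap {n : ℕ} (ξ : Fin n → Module.Dual K V) (j : Fin n) (f : V →ₗ[K] V)
    (t : ⨂[K] _ : Fin n, V) :
    pairV ξ (tmap j f t) = pairV (Function.update ξ j ((ξ j).comp f)) t := by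
  have h : (pairV ξ).comp (tmap j f) = pairV (Function.update ξ j ((ξ j).comp f)) := by
    apply PiTensorProduct.ext
    apply MultilinearMap.ext
    intro v
    simp only [LinearMap.compMultilinearMap_apply, LinearMap.comp_apply, tmap,
      PiTensorProduct.map_tprod, pairV, PiTensorProduct.lift.tprod,
      MultilinearMap.compLinearMap_apply, MultilinearMap.mkPiAlgebra_apply]
    apply Finset.prod_congr rfl
    intro k _
    rcases eq_or_ne k j with rfl | hk
    · simp
    · simp [Function.update_of_ne hk]
  exact congrArg (fun g => g t) h

lemma snoc_update_sign {m : ℕ} {M N : Type*} [AddCommGroup M] [Module K M]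
    [AddCommGroup N] [Module K N] (c : M [⋀^Fin (m + 1)]→ₗ[K] N)
    (ξ : Fin (m + 1) → M) (j : Fin (m + 1)) (η : M) :
    c (Fin.snoc (ξ ∘ j.succAbove) η) =
      ((-1 : K) ^ (m + (j : ℕ))) • c (Function.update ξ j η) := by
  let σ : Equiv.Perm (Fin (m + 1)) := (finRotate (m + 1)).trans (Fin.cycleRange j).symm
  have hσ : Function.update ξ j η ∘ σ = Fin.snoc (ξ ∘ j.succAbove) η := by
    funext k
    refine Fin.lastCases ?_ (fun i => ?_) k
    · simp only [Function.comp_apply, σ, Equiv.trans_apply, Fin.snoc_last]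
      rw [finRotate_last, Fin.cycleRange_symm_zero, Function.update_self]
    · simp only [Function.comp_apply, σ, Equiv.trans_apply, Fin.snoc_castSucc]
      rw [finRotate_succ_apply, Fin.coeSucc_eq_succ, Fin.cycleRange_symm_succ,
        Function.update_of_ne (Fin.succAbove_ne j i)]
  have hsign : Equiv.Perm.sign σ = (-1 : ℤˣ) ^ (m + (j : ℕ)) := by
    have : σ = (Fin.cycleRange j).symm * finRotate (m + 1) := rfl
    rw [this, Equiv.Perm.sign_mul, Equiv.Perm.sign_symm, Fin.sign_cycleRange,
      sign_finRotate, pow_add, mul_comm, Nat.add_sub_cancel]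
  have h := c.map_perm (Function.update ξ j η) σ
  rw [hσ, hsign] at h
  rw [h]
  rcases Nat.even_or_odd (m + (j : ℕ)) with he | ho
  · rw [he.neg_one_pow, he.neg_one_pow, one_smul, one_smul]
  · rw [ho.neg_one_pow, ho.neg_one_pow, Units.neg_smul, one_smul, neg_smul, one_smul]

/-- For an `n`-Lie bialgebra `(g, γ)` (`n = m+1`):
`⟨[ξ₁,…,ξₙ]_{g*}, [x₁,…,xₙ]⟩ = Σ_{i,j} (−1)^{i+j}
⟨ad*_{x₁,…,x̂ⱼ,…,xₙ}(ξᵢ), Ad*_{ξ₁,…,ξ̂ᵢ,…,ξₙ}(xⱼ)⟩`. -/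
theorem bialgebra_pairing_identity {m : ℕ} [FiniteDimensional K V]
    (b : MultilinearMap K (fun _ : Fin (m + 1) => V) V)
    (halt : ∀ (v : Fin (m + 1) → V) (i j : Fin (m + 1)), i ≠ j → v i = v j → b v = 0)
    (hFJ : ∀ (x : Fin m → V) (y : Fin (m + 1) → V),
      b (Fin.snoc x (b y)) = ∑ i, b (Function.update y i (b (Fin.snoc x (y i)))))
    (c : MultilinearMap K (fun _ : Fin (m + 1) => Module.Dual K V) (Module.Dual K V))
    (caltern : ∀ (ξ : Fin (m + 1) → Module.Dual K V) (i j : Fin (m + 1)),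
      i ≠ j → ξ i = ξ j → c ξ = 0)
    (cFJ : ∀ (ξ : Fin m → Module.Dual K V) (η : Fin (m + 1) → Module.Dual K V),
      c (Fin.snoc ξ (c η)) = ∑ i, c (Function.update η i (c (Fin.snoc ξ (η i)))))
    (γ : V →ₗ[K] ⨂[K] _ : Fin (m + 1), V)
    (hcompat : ∀ (ξ : Fin (m + 1) → Module.Dual K V) (x : V), c ξ x = pairV ξ (γ x))
    (hcocycle : ∀ x : Fin (m + 1) → V,
      γ (b x) = ∑ i : Fin (m + 1), ((-1 : K) ^ (m - (i : ℕ))) •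
        adP b (m + 1) (x ∘ i.succAbove) (γ (x i)))
    (Coad : (Fin m → Module.Dual K V) → V →ₗ[K] V)
    (hCoad : ∀ (Ξ : Fin m → Module.Dual K V) (x : V) (η : Module.Dual K V),
      η (Coad Ξ x) = -(c (Fin.snoc Ξ η)) x) :
    ∀ (ξ : Fin (m + 1) → Module.Dual K V) (x : Fin (m + 1) → V),
      c ξ (b x) = ∑ i : Fin (m + 1), ∑ j : Fin (m + 1),
        (-1 : K) ^ ((i : ℕ) + (j : ℕ)) *
          (coad b (x ∘ j.succAbove) (ξ i)) (Coad (ξ ∘ i.succAbove) (x j)) := by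
  intro ξ x
  let c' : Module.Dual K V [⋀^Fin (m + 1)]→ₗ[K] Module.Dual K V :=
    { toMultilinearMap := c
      map_eq_zero_of_eq' := fun v i j h hij => caltern v i j hij h }
  have hcompat' : ∀ (ξ' : Fin (m + 1) → Module.Dual K V) (y : V),
      pairV ξ' (γ y) = c ξ' y := fun ξ' y => (hcompat ξ' y).symm
  rw [hcompat, hcocycle]
  rw [map_sum]
  simp only [map_smul, smul_eq_mul, adP, LinearMap.sum_apply, map_sum, Finset.mul_sum]
  conv_rhs => rw [Finset.sum_comm]
  refine Finset.sum_congr rfl fun i _ => ?_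
  refine Finset.sum_congr rfl fun j _ => ?_
  rw [pairV_tmap, hcompat']
  have hdual : (ξ j).comp (adMap b (x ∘ i.succAbove)) =
      -(coad b (x ∘ i.succAbove) (ξ j)) := by
    simp [coad, LinearMap.dualMap_apply']
  rw [hdual]
  have hneg : c (Function.update ξ j (-(coad b (x ∘ i.succAbove) (ξ j)))) =
      -(c (Function.update ξ j (coad b (x ∘ i.succAbove) (ξ j)))) := by
    have := c.map_update_smul ξ j (-1 : K) (coad b (x ∘ i.succAbove) (ξ j))
    simpa using this
  rw [hneg]
  rw [hCoad]
  have hsnoc := snoc_update_sign c' ξ j (coad b (x ∘ i.succAbove) (ξ j))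
  have hsnoc' : c (Fin.snoc (ξ ∘ j.succAbove) (coad b (x ∘ i.succAbove) (ξ j))) =
      ((-1 : K) ^ (m + (j : ℕ))) • c (Function.update ξ j (coad b (x ∘ i.succAbove) (ξ j))) :=
    hsnoc
  rw [hsnoc']
  have hi : (i : ℕ) ≤ m := Nat.lt_succ_iff.mp i.isLt
  have hs : (-1 : K) ^ ((j : ℕ) + (i : ℕ)) * (-1 : K) ^ (m + (j : ℕ)) =
      (-1 : K) ^ (m - (i : ℕ)) := by
    rw [← pow_add]
    have h2 : (j : ℕ) + i + (m + j) = (m - (i : ℕ)) + 2 * ((i : ℕ) + j) := by omega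
    rw [h2, pow_add, pow_mul, neg_one_sq, one_pow, mul_one]
  simp only [LinearMap.neg_apply, LinearMap.smul_apply, smul_eq_mul]
  rw [← hs]
  ring
end
end
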